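/- Let A be a finitary abelian category. Then h^R_{MN} = g^R_{MN} · a_M · a_N / a_R, where g^R_{MN} is the number of subobjects U of R with U ≅ N and R/U ≅ M, and a_X = |Aut_A(X)| for any object X. -/

import Mathlib

open CategoryTheory CategoryTheory.Limits

universe v u

namespace HallPaper

variable {C : Type u} [Category.{v} C] [Abelian C]

/-- A short exact sequence `0 → N → E → M → 0`: an extension of `M` by `N`. -/
structure Extension (M N : C) where
  E : C
  ι : N ⟶ E
  π : E ⟶ M
  w : ι ≫ π = 0
  shortExact : (ShortComplex.mk ι π w).ShortExact

/-- Equivalence of extensions: an isomorphism of middle terms commuting with the maps. -/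
def extEquiv {M N : C} (e₁ e₂ : Extension M N) : Prop :=
  ∃ φ : e₁.E ≅ e₂.E, e₁.ι ≫ φ.hom = e₂.ι ∧ φ.hom ≫ e₂.π = e₁.π

/-- `Ext¹(M,N)` as the set of equivalence classes of extensions of `M` by `N`. -/
def Ext1 (M N : C) : Type _ := Quot (@extEquiv C _ _ M N)

/-- The subset of `Ext¹(M,N)` of classes whose middle term is isomorphic to `R`. -/
def Ext1R (M N R : C) : Type _ :=
  Quot (fun (e₁ e₂ : {e : Extension M N // Nonempty (e.E ≅ R)}) => extEquiv e₁.1 e₂.1)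

/-- The Hall number `h^R_{M N} = |Ext¹(M,N)_R| / |Hom(M,N)|`. -/
noncomputable def hallNum (M N R : C) : ℚ :=
  (Nat.card (Ext1R M N R) : ℚ) / (Nat.card (M ⟶ N) : ℚ)

/-- `a_X = |Aut X|`. -/
noncomputable def autCard (X : C) : ℚ := (Nat.card (Aut X) : ℚ)

/-- The set of isomorphism classes of objects of `C`. -/
abbrev IsoCls (C : Type u) [Category.{v} C] : Type u := Quotient (isIsomorphicSetoid C)

/-- The isomorphism class of an object. -/
def cls (X : C) : IsoCls C := Quotient.mk _ X

end HallPaper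

namespace HallPaper

/-- `g^R_{MN}`: the number of subobjects `U ≤ R` with `U ≅ N` and `R/U ≅ M`. -/
noncomputable def subCount {C : Type u} [Category.{v} C] [Abelian C] (M N R : C) : ℚ :=
  (Nat.card {U : Subobject R //
      Nonempty ((U : C) ≅ N) ∧ Nonempty (Limits.cokernel U.arrow ≅ M)} : ℚ)

end HallPaper

/-!
Both sides count the short exact sequences `0 → N → R → M → 0` whose middle term is `R` itself.
`Aut R` acts on them; the orbits are the classes of `Ext¹(M,N)_R`, and the stabilizer of
`(i, p)` consists of the automorphisms `1 + p ≫ h ≫ i` with `h : M ⟶ N`, so orbit–stabilizer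
gives `|Ext¹(M,N)_R| · a_R = #SES · |Hom(M,N)|`. Sending `(i, p)` to the subobject `im i`
instead, the fiber over `U` is `Iso(N, U) × Iso(R/U, M)`, of size `a_N · a_M`, whence
`#SES = g^R_{MN} · a_N · a_M`.
-/

theorem Nat.card_eq_card_mul_of_card_fiber {α β : Type*} [Finite α] [Finite β] (f : α → β)
    {k : ℕ} (hk : ∀ b, Nat.card {a // f a = b} = k) : Nat.card α = Nat.card β * k := by
  have := Fintype.ofFinite β
  rw [Nat.card_congr (Equiv.sigmaFiberEquiv f).symm, Nat.card_sigma]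
  simp [hk, Nat.card_eq_fintype_card]

theorem MulAction.card_orbitRel_quotient_mul_card_group {G X : Type*} [Group G]
    [MulAction G X] [Finite X] {k : ℕ} (hk : ∀ x : X, Nat.card (stabilizer G x) = k) :
    Nat.card (orbitRel.Quotient G X) * Nat.card G = Nat.card X * k := by
  have := Fintype.ofFinite (orbitRel.Quotient G X)
  have orbit_stabilizer (x : X) : Nat.card (orbit G x) * k = Nat.card G := by
    rw [← hk x, Nat.card_congr (orbitEquivQuotientStabilizer G x), ← Subgroup.index,
      Subgroup.index_mul_card]
  rw [Nat.card_congr (selfEquivSigmaOrbits G X), Nat.card_sigma, Finset.sum_mul,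
    Finset.sum_congr rfl fun ω _ => orbit_stabilizer ω.out, Finset.sum_const, Finset.card_univ,
    smul_eq_mul, Nat.card_eq_fintype_card]

namespace HallPaper

variable {C : Type u} [Category.{v} C] [Abelian C]

@[ext]
structure SES (M N R : C) where
  i : N ⟶ R
  p : R ⟶ M
  w : i ≫ p = 0
  shortExact : (ShortComplex.mk i p w).ShortExact

namespace SES

variable {M N R M' N' R' : C}

instance (s : SES M N R) : Mono s.i := s.shortExact.mono_f

instance (s : SES M N R) : Epi s.p := s.shortExact.epi_g

instance [Finite (N ⟶ R)] [Finite (R ⟶ M)] : Finite (SES M N R) :=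
  Finite.of_injective (fun s => (s.i, s.p)) fun _ _ h =>
    SES.ext (congrArg Prod.fst h) (congrArg Prod.snd h)

@[simps]
def ofIso (s : SES M N R) (a : N' ≅ N) (φ : R ≅ R') (b : M ≅ M') : SES M' N' R' where
  i := a.hom ≫ s.i ≫ φ.hom
  p := φ.inv ≫ s.p ≫ b.hom
  w := by simp [reassoc_of% s.w]
  shortExact := ShortComplex.shortExact_of_iso
    (ShortComplex.isoMk a.symm φ b (by simp) (by simp)) s.shortExact

instance : SMul (Aut R) (SES M N R) where
  smul φ s := s.ofIso (Iso.refl N) φ (Iso.refl M)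

@[simp] lemma smul_i (φ : Aut R) (s : SES M N R) : (φ • s).i = s.i ≫ φ.hom :=
  Category.id_comp _

@[simp] lemma smul_p (φ : Aut R) (s : SES M N R) : (φ • s).p = φ.inv ≫ s.p :=
  congrArg _ (Category.comp_id _)

instance : MulAction (Aut R) (SES M N R) where
  one_smul s := by
    ext
    exacts [(smul_i 1 s).trans (Category.comp_id _), (smul_p 1 s).trans (Category.id_comp _)]
  mul_smul φ ψ s := by
    ext
    · rw [smul_i, smul_i, smul_i, Category.assoc]; rfl
    · rw [smul_p, smul_p, smul_p, ← Category.assoc]; rfl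

lemma mem_stabilizer_iff (s : SES M N R) (φ : Aut R) :
    φ ∈ MulAction.stabilizer (Aut R) s ↔ s.i ≫ φ.hom = s.i ∧ φ.hom ≫ s.p = s.p := by
  rw [MulAction.mem_stabilizer_iff, SES.ext_iff, smul_i, smul_p,
    Iso.inv_comp_eq (α := (φ : R ≅ R)), eq_comm (a := s.p)]

lemma exists_p_comp_comp_i_eq (s : SES M N R) {f : R ⟶ R} (hi : s.i ≫ f = 0)
    (hp : f ≫ s.p = 0) : ∃ h : M ⟶ N, s.p ≫ h ≫ s.i = f := by
  let u := s.shortExact.exact.lift f hp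
  have hu : u ≫ s.i = f := s.shortExact.exact.lift_f f hp
  have hiu : s.i ≫ u = 0 := by rw [← cancel_mono s.i, Category.assoc, hu, hi, zero_comp]
  exact ⟨s.shortExact.exact.desc u hiu, by
    rw [← Category.assoc, s.shortExact.exact.g_desc u hiu, hu]⟩

@[simps]
def shearAut (s : SES M N R) (h : M ⟶ N) : Aut R where
  hom := 𝟙 R + s.p ≫ h ≫ s.i
  inv := 𝟙 R - s.p ≫ h ≫ s.i
  hom_inv_id := by simp [Preadditive.comp_sub, Preadditive.add_comp, reassoc_of% s.w]
  inv_hom_id := by simp [Preadditive.comp_add, Preadditive.sub_comp, reassoc_of% s.w]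

lemma shearAut_mem_stabilizer (s : SES M N R) (h : M ⟶ N) :
    s.shearAut h ∈ MulAction.stabilizer (Aut R) s := by
  rw [mem_stabilizer_iff]
  simp [Preadditive.comp_add, Preadditive.add_comp, s.w, reassoc_of% s.w]

lemma shearAut_injective (s : SES M N R) : Function.Injective s.shearAut := fun h₁ h₂ he => by
  have := add_left_cancel (congrArg Iso.hom he)
  rwa [cancel_epi, cancel_mono] at this

lemma exists_shearAut_eq (s : SES M N R) {φ : Aut R}
    (hφ : φ ∈ MulAction.stabilizer (Aut R) s) : ∃ h, s.shearAut h = φ := by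
  obtain ⟨hi, hp⟩ := (mem_stabilizer_iff s φ).1 hφ
  obtain ⟨h, hh⟩ := s.exists_p_comp_comp_i_eq (f := φ.hom - 𝟙 R)
    (by simp [Preadditive.comp_sub, hi]) (by simp [Preadditive.sub_comp, hp])
  exact ⟨h, Aut.ext (by simp [hh])⟩

lemma card_stabilizer (s : SES M N R) :
    Nat.card (MulAction.stabilizer (Aut R) s) = Nat.card (M ⟶ N) := by
  refine (Nat.card_eq_of_bijective (fun h => ⟨s.shearAut h, s.shearAut_mem_stabilizer h⟩)
    ⟨fun h₁ h₂ he => s.shearAut_injective (congrArg Subtype.val he), ?_⟩).symm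
  rintro ⟨φ, hφ⟩
  obtain ⟨h, rfl⟩ := s.exists_shearAut_eq hφ
  exact ⟨h, rfl⟩

lemma orbitRel_iff {s t : SES M N R} : MulAction.orbitRel (Aut R) (SES M N R) s t ↔
    ∃ φ : R ≅ R, t.i ≫ φ.hom = s.i ∧ φ.inv ≫ t.p = s.p := by
  constructor
  · rintro ⟨φ, rfl⟩
    exact ⟨φ, (smul_i φ t).symm, (smul_p φ t).symm⟩
  · rintro ⟨φ, hi, hp⟩
    exact ⟨φ, SES.ext ((smul_i φ t).trans hi) ((smul_p φ t).trans hp)⟩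

def toExtension (s : SES M N R) : Extension M N := ⟨R, s.i, s.p, s.w, s.shortExact⟩

lemma extEquiv_toExtension {s t : SES M N R}
    (h : MulAction.orbitRel (Aut R) (SES M N R) s t) :
    extEquiv s.toExtension t.toExtension := by
  obtain ⟨φ, hi, hp⟩ := orbitRel_iff.1 h
  exact ⟨φ.symm, by simp [toExtension, ← hi], hp⟩

end SES

variable {M N R : C}

def Extension.toSES (e : Extension M N) (φ : e.E ≅ R) : SES M N R :=
  SES.ofIso ⟨e.ι, e.π, e.w, e.shortExact⟩ (Iso.refl N) φ (Iso.refl M)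

lemma Extension.orbitRel_toSES {e₁ e₂ : Extension M N} (h : extEquiv e₁ e₂) (φ₁ : e₁.E ≅ R)
    (φ₂ : e₂.E ≅ R) :
    MulAction.orbitRel (Aut R) (SES M N R) (e₁.toSES φ₁) (e₂.toSES φ₂) := by
  obtain ⟨ψ, hι, hπ⟩ := h
  exact SES.orbitRel_iff.2
    ⟨φ₂.symm ≪≫ ψ.symm ≪≫ φ₁, by simp [toSES, ← hι], by simp [toSES, ← hπ]⟩

noncomputable def ext1REquivOrbitRelQuotient :
    Ext1R M N R ≃ MulAction.orbitRel.Quotient (Aut R) (SES M N R) where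
  toFun := Quot.lift (fun e => ⟦e.1.toSES e.2.some⟧)
    fun _ _ h => Quotient.sound (Extension.orbitRel_toSES h _ _)
  invFun := Quotient.lift (fun s => Quot.mk _ ⟨s.toExtension, ⟨Iso.refl R⟩⟩)
    fun _ _ h => Quot.sound (SES.extEquiv_toExtension h)
  left_inv := by
    rintro ⟨e, he⟩
    exact Quot.sound ⟨he.some.symm, by simp [SES.toExtension, Extension.toSES],
      by simp [SES.toExtension, Extension.toSES]⟩
  right_inv := by
    rintro ⟨s⟩
    exact Quotient.sound ⟨_, rfl⟩

namespace SES

@[simps]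
noncomputable def ofSubobject (U : Subobject R) : SES (cokernel U.arrow) (U : C) R where
  i := U.arrow
  p := cokernel.π U.arrow
  w := cokernel.condition U.arrow
  shortExact := .mk' (ShortComplex.exact_cokernel U.arrow) inferInstance inferInstance

lemma mk_ofIso_ofSubobject_i (U : Subobject R) (α : N ≅ (U : C)) (β : cokernel U.arrow ≅ M) :
    Subobject.mk ((ofSubobject U).ofIso α (Iso.refl R) β).i = U := by
  simpa using (Subobject.mk_eq_mk_of_comm _ U.arrow α rfl).trans U.mk_arrow

lemma exists_cokernel_iso (s : SES M N R) {K : C} {f : K ⟶ R} (e : K ≅ N)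
    (h : e.hom ≫ s.i = f) : ∃ β : cokernel f ≅ M, cokernel.π f ≫ β.hom = s.p := by
  have hs : IsColimit (CokernelCofork.ofπ (f := f) s.p (by simp [← h, s.w])) :=
    IsCokernel.ofIsoComp s.i f e.symm (by simp [← h]) s.shortExact.gIsCokernel
  exact ⟨(cokernelIsCokernel f).coconePointUniqueUpToIso hs,
    (cokernelIsCokernel f).comp_coconePointUniqueUpToIso_hom hs WalkingParallelPair.one⟩

lemma card_subobject_fiber (U : Subobject R) :
    Nat.card {s : SES M N R // Subobject.mk s.i = U} =
      Nat.card ((N ≅ (U : C)) × (cokernel U.arrow ≅ M)) := by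
  refine (Nat.card_eq_of_bijective
    (fun αβ => ⟨_, mk_ofIso_ofSubobject_i U αβ.1 αβ.2⟩) ⟨?_, ?_⟩).symm
  · rintro ⟨α, β⟩ ⟨α', β'⟩ h
    simp only [Subtype.mk.injEq, SES.ext_iff, ofIso_i, ofIso_p, ofSubobject_i, ofSubobject_p,
      Iso.refl_hom, Iso.refl_inv, Category.comp_id, Category.id_comp, cancel_mono,
      cancel_epi] at h
    rw [Iso.ext h.1, Iso.ext h.2]
  · rintro ⟨s, rfl⟩
    obtain ⟨β, hβ⟩ := s.exists_cokernel_iso _ (Subobject.underlyingIso_hom_comp_eq_mk s.i)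
    exact ⟨((Subobject.underlyingIso s.i).symm, β),
      Subtype.ext (SES.ext (by simp) (by simp [hβ]))⟩

end SES

abbrev ExtSubobject (M N R : C) : Type _ :=
  {U : Subobject R // Nonempty ((U : C) ≅ N) ∧ Nonempty (cokernel U.arrow ≅ M)}

noncomputable def SES.toExtSubobject (s : SES M N R) : ExtSubobject M N R :=
  ⟨Subobject.mk s.i, ⟨Subobject.underlyingIso s.i⟩,
    let ⟨β, _⟩ := s.exists_cokernel_iso _ (Subobject.underlyingIso_hom_comp_eq_mk s.i); ⟨β⟩⟩

lemma SES.toExtSubobject_surjective :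
    Function.Surjective (SES.toExtSubobject (M := M) (N := N) (R := R)) := by
  rintro ⟨U, ⟨α⟩, ⟨β⟩⟩
  exact ⟨_, Subtype.ext (mk_ofIso_ofSubobject_i U α.symm β)⟩

lemma SES.card_fiber_toExtSubobject (U : ExtSubobject M N R) :
    Nat.card {s : SES M N R // s.toExtSubobject = U} = Nat.card (Aut N) * Nat.card (Aut M) := by
  obtain ⟨U, ⟨α⟩, ⟨β⟩⟩ := U
  calc _ = Nat.card ((N ≅ (U : C)) × (cokernel U.arrow ≅ M)) :=
        (Nat.card_congr (Equiv.subtypeEquivRight fun s => Subtype.ext_iff)).trans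
          (card_subobject_fiber U)
    _ = Nat.card (Aut N) * Nat.card (Aut M) := by
      rw [Nat.card_congr ((Iso.isoCongrRight α).prodCongr (Iso.isoCongrLeft β)), Nat.card_prod]
      rfl

instance (X : C) [Finite (X ⟶ X)] : Finite (Aut X) :=
  Finite.of_injective (fun φ => φ.hom) fun _ _ => Aut.ext

variable (M N R) [∀ X Y : C, Finite (X ⟶ Y)]

instance : Finite (ExtSubobject M N R) := .of_surjective _ SES.toExtSubobject_surjective

lemma card_ses : Nat.card (SES M N R) =
    Nat.card (ExtSubobject M N R) * (Nat.card (Aut N) * Nat.card (Aut M)) :=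
  Nat.card_eq_card_mul_of_card_fiber _ SES.card_fiber_toExtSubobject

lemma card_ext1R_mul_card_aut :
    Nat.card (Ext1R M N R) * Nat.card (Aut R) = Nat.card (SES M N R) * Nat.card (M ⟶ N) := by
  rw [Nat.card_congr ext1REquivOrbitRelQuotient]
  exact MulAction.card_orbitRel_quotient_mul_card_group SES.card_stabilizer

end HallPaper

/-- **Riedtmann's formula**: `h^R_{MN} = g^R_{MN} · a_M · a_N / a_R` in a finitary
abelian category. -/
theorem riedtmann_formula
    {C : Type u} [Category.{v} C] [Abelian C]
    [∀ X Y : C, Finite (X ⟶ Y)] [∀ X Y : C, Finite (HallPaper.Ext1 X Y)]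
    (M N R : C) :
    HallPaper.hallNum M N R =
      HallPaper.subCount M N R * HallPaper.autCard M * HallPaper.autCard N /
        HallPaper.autCard R := by
  have hHom : (Nat.card (M ⟶ N) : ℚ) ≠ 0 := by
    have : Nonempty (M ⟶ N) := ⟨0⟩
    exact_mod_cast Nat.card_pos.ne'
  have hAut : (Nat.card (Aut R) : ℚ) ≠ 0 := by exact_mod_cast Nat.card_pos.ne'
  simp only [HallPaper.hallNum, HallPaper.subCount, HallPaper.autCard]
  rw [div_eq_div_iff hHom hAut]
  have key := HallPaper.card_ext1R_mul_card_aut M N R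
  rw [HallPaper.card_ses] at key
  exact_mod_cast key.trans (by ring)
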